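/- arXiv:1510.09025 — 2 statements merged into one kernel-verified Lean document; each statement's English description precedes it below -/
import Mathlib

section
/- If c_s > 0 and c_ℓ > 0, then in any stable network all speaking and listening edges are complete; that is, s_{vw} ∈ E_s implies ℓ_{wv} ∈ E_ℓ, and ℓ_{vw} ∈ E_ℓ implies s_{wv} ∈ E_s. -/
/-- A bidirected network: speaking edges `Es` and listening edges `El`. -/
structure BiNet (V : Type*) where
  Es : V → V → Prop
  El : V → V → Prop

variable {V : Type*} [Fintype V] [DecidableEq V]

/-- A speaking step from `a` to `b`: the speaking edge `s_{ab}` matched by `ℓ_{ba}`. -/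
def sStep (G : BiNet V) (a b : V) : Prop := G.Es a b ∧ G.El b a

/-- A listening step from `a` to `b`: the listening edge `ℓ_{ab}` matched by `s_{ba}`. -/
def lStep (G : BiNet V) (a b : V) : Prop := G.El a b ∧ G.Es b a

/-- Path of length at most `k` for the step relation. -/
def within {W : Type*} (step : W → W → Prop) : ℕ → W → W → Prop
  | 0, a, b => a = b
  | m+1, a, b => a = b ∨ ∃ w, step a w ∧ within step m w b

/-- The `k`-speaking-reachable set of `v` (excluding `v`). -/
def Rs (G : BiNet V) (k : ℕ) (v : V) : Set V := {w | w ≠ v ∧ within (sStep G) k v w}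

/-- The `k`-listening-reachable set of `v` (excluding `v`). -/
def Rl (G : BiNet V) (k : ℕ) (v : V) : Set V := {w | w ≠ v ∧ within (lStep G) k v w}

/-- Speaking out-degree. -/
noncomputable def dsOut (G : BiNet V) (v : V) : ℕ := {w | G.Es v w}.ncard

/-- Listening out-degree. -/
noncomputable def dlOut (G : BiNet V) (v : V) : ℕ := {w | G.El v w}.ncard

/-- Utility of agent `v`. -/
noncomputable def util (G : BiNet V) (k : ℕ) (cs cl : ℝ) (v : V) : ℝ :=
  (((Rs G k v).ncard : ℝ) - cs * (dsOut G v : ℝ)) +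
    (((Rl G k v).ncard : ℝ) - cl * (dlOut G v : ℝ))

/-- Add the speaking edge `s_{uv}`. -/
def addS (G : BiNet V) (u v : V) : BiNet V :=
  ⟨fun a b => G.Es a b ∨ (a = u ∧ b = v), G.El⟩

/-- Delete the speaking edge `s_{uv}`. -/
def delS (G : BiNet V) (u v : V) : BiNet V :=
  ⟨fun a b => G.Es a b ∧ ¬(a = u ∧ b = v), G.El⟩

/-- Add the listening edge `ℓ_{uv}`. -/
def addL (G : BiNet V) (u v : V) : BiNet V :=
  ⟨G.Es, fun a b => G.El a b ∨ (a = u ∧ b = v)⟩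

/-- Delete the listening edge `ℓ_{uv}`. -/
def delL (G : BiNet V) (u v : V) : BiNet V :=
  ⟨G.Es, fun a b => G.El a b ∧ ¬(a = u ∧ b = v)⟩

/-- Unilateral deviation: `v` replaces its speaking/listening out-edges by `Ss`/`Sl`. -/
def deviate (G : BiNet V) (v : V) (Ss Sl : V → Prop) : BiNet V :=
  ⟨fun a b => if a = v then Ss b else G.Es a b,
   fun a b => if a = v then Sl b else G.El a b⟩

/-- Stability: no unilateral deviation strictly improves an agent's utility. -/
def Stable (G : BiNet V) (k : ℕ) (cs cl : ℝ) : Prop :=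
  ∀ v Ss Sl, util (deviate G v Ss Sl) k cs cl v ≤ util G k cs cl v

/-- Bidirected pairwise stability. -/
def BiPairwiseStable (G : BiNet V) (k : ℕ) (cs cl : ℝ) : Prop :=
  (∀ u v, G.Es u v → util (delS G u v) k cs cl u ≤ util G k cs cl u) ∧
  (∀ u v, G.El u v → util (delL G u v) k cs cl u ≤ util G k cs cl u) ∧
  (∀ u v, util G k cs cl u < util (addL (addS G u v) v u) k cs cl u →
      util (addL (addS G u v) v u) k cs cl v < util G k cs cl v)

/-! An edge `s_{vw}` whose matching edge `ℓ_{wv}` is absent lies on no matched path, so deleting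
it changes neither reachable set of `v` while saving `v` the cost `c_s`; stability forbids such a
profitable deletion. Exchanging the roles of speaking and listening gives the listening half. -/

section Completeness

variable {α : Type*} {G : BiNet α} {k : ℕ} {cs cl : ℝ} {v w : α}

def BiNet.swap (G : BiNet α) : BiNet α := ⟨G.El, G.Es⟩

theorem util_swap (G : BiNet α) (k : ℕ) (cs cl : ℝ) (v : α) :
    util G.swap k cl cs v = util G k cs cl v :=
  add_comm _ _

theorem Stable.swap [DecidableEq α] (h : Stable G k cs cl) : Stable G.swap k cl cs :=
  fun v Ss Sl => (util_swap (deviate G v Sl Ss) k cs cl v).trans_le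
    ((h v Sl Ss).trans_eq (util_swap G k cs cl v).symm)

theorem deviate_eq_delS [DecidableEq α] (G : BiNet α) (v w : α) :
    deviate G v (fun b => G.Es v b ∧ b ≠ w) (G.El v) = delS G v w := by
  simp only [deviate, delS, BiNet.mk.injEq]
  constructor <;> funext a b <;> by_cases ha : a = v <;> simp [ha]

theorem Stable.util_delS_le [DecidableEq α] (h : Stable G k cs cl) (v w : α) :
    util (delS G v w) k cs cl v ≤ util G k cs cl v :=
  deviate_eq_delS G v w ▸ h v _ _

theorem sStep_delS_of_not_El (h : ¬G.El w v) : sStep (delS G v w) = sStep G := by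
  funext a b
  simp only [sStep, delS, eq_iff_iff]
  exact ⟨fun ⟨⟨hab, _⟩, hba⟩ => ⟨hab, hba⟩,
    fun ⟨hab, hba⟩ => ⟨⟨hab, by rintro ⟨rfl, rfl⟩; exact h hba⟩, hba⟩⟩

theorem lStep_delS_of_not_El (h : ¬G.El w v) : lStep (delS G v w) = lStep G := by
  funext a b
  simp only [lStep, delS, eq_iff_iff]
  exact ⟨fun ⟨hab, hba, _⟩ => ⟨hab, hba⟩,
    fun ⟨hab, hba⟩ => ⟨hab, hba, by rintro ⟨rfl, rfl⟩; exact h hab⟩⟩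

theorem dsOut_delS_lt [Finite α] (h : G.Es v w) : dsOut (delS G v w) v < dsOut G v :=
  Set.ncard_lt_ncard ⟨fun _ hb => hb.1, fun hsub => (hsub h).2 ⟨rfl, rfl⟩⟩

theorem dlOut_delS (G : BiNet α) (v w : α) : dlOut (delS G v w) = dlOut G := rfl

theorem util_lt_util_delS [Finite α] (hcs : 0 < cs) (hEs : G.Es v w) (hEl : ¬G.El w v) :
    util G k cs cl v < util (delS G v w) k cs cl v := by
  have hds : (dsOut (delS G v w) v : ℝ) < dsOut G v := Nat.cast_lt.mpr (dsOut_delS_lt hEs)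
  simp only [util, Rs, Rl, sStep_delS_of_not_El hEl, lStep_delS_of_not_El hEl, dlOut_delS]
  linarith [mul_lt_mul_of_pos_left hds hcs]

theorem Stable.El_of_Es [Finite α] [DecidableEq α] (h : Stable G k cs cl) (hcs : 0 < cs)
    (hEs : G.Es v w) : G.El w v :=
  by_contra fun hEl => (h.util_delS_le v w).not_gt (util_lt_util_delS hcs hEs hEl)

end Completeness

/-- If `c_s > 0` and `c_ℓ > 0`, then in any stable network all edges are complete:
`s_{vw} ∈ E_s → ℓ_{wv} ∈ E_ℓ` and `ℓ_{vw} ∈ E_ℓ → s_{wv} ∈ E_s`. -/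
theorem stmt1 (G : BiNet V) (k : ℕ) (cs cl : ℝ)
    (hcs : 0 < cs) (hcl : 0 < cl) (hstable : Stable G k cs cl) :
    ∀ v w, (G.Es v w → G.El w v) ∧ (G.El v w → G.Es w v) :=
  fun _ _ => ⟨hstable.El_of_Es hcs, hstable.swap.El_of_Es hcl⟩
end

section
/- If c_s > 0 and c_ℓ > 0, then in any efficient network (one maximizing the sum of agents' utilities) all speaking and listening edges are complete. -/
variable {V : Type*} [Fintype V] [DecidableEq V]

/-- Social welfare: the sum of all agents' utilities. -/
noncomputable def welfare (G : BiNet V) (k : ℕ) (cs cl : ℝ) : ℝ :=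
  ∑ v : V, util G k cs cl v

/-!
An incomplete edge contributes nothing to reachability, which only follows matched pairs
`s_{ab}`, `ℓ_{ba}`. Deleting it therefore leaves every agent's reachable sets unchanged and
saves its owner the edge cost, so it strictly raises welfare when that cost is positive.
-/

section
variable {α : Type*} (G : BiNet α) {v w : α}

lemma sStep_delS (h : ¬ G.El w v) : sStep (delS G v w) = sStep G := by
  ext a b
  simp only [sStep, delS, and_congr_left_iff]
  rintro hba
  exact ⟨And.left, fun hab => ⟨hab, by rintro ⟨rfl, rfl⟩; exact h hba⟩⟩

lemma lStep_delS (h : ¬ G.El w v) : lStep (delS G v w) = lStep G := by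
  ext a b
  simp only [lStep, delS, and_congr_right_iff]
  rintro hab
  exact ⟨And.left, fun hba => ⟨hba, by rintro ⟨rfl, rfl⟩; exact h hab⟩⟩

lemma sStep_delL (h : ¬ G.Es w v) : sStep (delL G v w) = sStep G := by
  ext a b
  simp only [sStep, delL, and_congr_right_iff]
  rintro hab
  exact ⟨And.left, fun hba => ⟨hba, by rintro ⟨rfl, rfl⟩; exact h hab⟩⟩

lemma lStep_delL (h : ¬ G.Es w v) : lStep (delL G v w) = lStep G := by
  ext a b
  simp only [lStep, delL, and_congr_left_iff]
  rintro hba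
  exact ⟨And.left, fun hab => ⟨hab, by rintro ⟨rfl, rfl⟩; exact h hba⟩⟩

end

lemma ncard_setOf_and_not_eq {α : Type*} [Finite α] [DecidableEq α] {R : α → α → Prop}
    {v w : α} (hR : R v w) (u : α) :
    ({b | R u b ∧ ¬(u = v ∧ b = w)}.ncard : ℝ) = {b | R u b}.ncard - if u = v then 1 else 0 := by
  split_ifs with hu
  · subst hu
    have herase : {b | R u b ∧ ¬(u = u ∧ b = w)} = {b | R u b} \ {w} := by
      ext b; simp
    rw [herase, ← Set.ncard_sdiff_singleton_add_one (s := {b | R u b}) hR]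
    push_cast; ring
  · simp [hu]

section
variable {α : Type*} [DecidableEq α] [Finite α] (G : BiNet α) (k : ℕ) (cs cl : ℝ) {v w : α}

lemma util_delS (hE : G.Es v w) (h : ¬ G.El w v) (u : α) :
    util (delS G v w) k cs cl u = util G k cs cl u + if u = v then cs else 0 := by
  simp only [util, Rs, Rl, sStep_delS G h, lStep_delS G h]
  simp only [dsOut, dlOut, delS]
  rw [ncard_setOf_and_not_eq hE]
  split_ifs <;> ring

lemma util_delL (hE : G.El v w) (h : ¬ G.Es w v) (u : α) :
    util (delL G v w) k cs cl u = util G k cs cl u + if u = v then cl else 0 := by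
  simp only [util, Rs, Rl, sStep_delL G h, lStep_delL G h]
  simp only [dsOut, dlOut, delL]
  rw [ncard_setOf_and_not_eq hE]
  split_ifs <;> ring

end

lemma welfare_eq_add_of_util_eq {α : Type*} [Fintype α] [DecidableEq α] {G G' : BiNet α}
    {k : ℕ} {cs cl c : ℝ} (v : α)
    (h : ∀ u, util G' k cs cl u = util G k cs cl u + if u = v then c else 0) :
    welfare G' k cs cl = welfare G k cs cl + c := by
  simp [welfare, h, Finset.sum_add_distrib]

/-- If `c_s > 0` and `c_ℓ > 0`, then in any efficient network (one maximizing the sum of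
agents' utilities) all speaking and listening edges are complete. -/
theorem stmt2 (G : BiNet V) (k : ℕ) (cs cl : ℝ)
    (hcs : 0 < cs) (hcl : 0 < cl)
    (heff : ∀ G' : BiNet V, welfare G' k cs cl ≤ welfare G k cs cl) :
    ∀ v w, (G.Es v w → G.El w v) ∧ (G.El v w → G.Es w v) := by
  intro v w
  constructor
  · intro hE
    by_contra h
    have hgain := welfare_eq_add_of_util_eq v (util_delS G k cs cl hE h)
    linarith [heff (delS G v w)]
  · intro hE
    by_contra h
    have hgain := welfare_eq_add_of_util_eq v (util_delL G k cs cl hE h)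
    linarith [heff (delL G v w)]
end
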